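/- If two distinct partitions ν¹ and ν² differ by one box, then for every partition α the partitions ν¹ + α and ν² + α differ by one box, and the partitions ν¹ ∪ α and ν² ∪ α differ by one box. -/

import Mathlib

/-- A partition: a weakly decreasing finitely supported sequence of naturals. -/
def IsPartition (f : ℕ →₀ ℕ) : Prop := ∀ ⦃i j : ℕ⦄, i ≤ j → f j ≤ f i

/-- The size `|λ|` of a partition: the sum of its parts. -/
noncomputable def psize (f : ℕ →₀ ℕ) : ℕ := f.sum fun _ n => n

/-- The intersection of two partitions: pointwise minimum. -/
noncomputable def pinter (f g : ℕ →₀ ℕ) : ℕ →₀ ℕ := Finsupp.zipWith min (min_self 0) f g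

/-- Two partitions differ by one box: they are distinct and
`|λ ∩ μ| = max(|λ|,|μ|) − 1`. -/
noncomputable def DifferByOneBox (f g : ℕ →₀ ℕ) : Prop :=
  f ≠ g ∧ psize (pinter f g) + 1 = max (psize f) (psize g)

/-- The staircase partition `δ_n = (n, n−1, …, 2, 1)` (0-indexed). -/
noncomputable def staircase (n : ℕ) : ℕ →₀ ℕ :=
  Finsupp.onFinset (Finset.range n) (fun i => n - i)
    (fun a ha => Finset.mem_range.mpr (Nat.lt_of_sub_ne_zero ha))

/-- The multiset of (positive) parts of a partition. -/
def parts (f : ℕ →₀ ℕ) : Multiset ℕ := f.support.val.map f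

/-- The union `λ ∪ μ` of two partitions: sort the combined multiset of parts
into weakly decreasing order. -/
noncomputable def punion (f g : ℕ →₀ ℕ) : ℕ →₀ ℕ :=
  Finsupp.onFinset (Finset.range (parts f + parts g).card)
    (fun i => ((parts f + parts g).sort (· ≤ ·)).reverse.getD i 0)
    (fun i hi => by
      rw [Finset.mem_range]
      by_contra h
      push_neg at h
      exact hi (List.getD_eq_default _ _ (by simpa using h)))

/-!
Both `· + α` and `· ∪ α` add `|α|` to the size, and both commute with intersection:
`(λ + α) ∩ (μ + α) = (λ ∩ μ) + α` holds rowwise, and `(λ ∪ α) ∩ (μ ∪ α) = (λ ∩ μ) ∪ α` holds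
columnwise, because the `t`-th column of `λ ∪ α` has length `λ'_t + α'_t` and the `t`-th column
of `λ ∩ μ` has length `min λ'_t μ'_t`. So the size equation defining "differ by one box" is
preserved, and it already forces the two partitions to be distinct.
-/

lemma pinter_apply (f g : ℕ →₀ ℕ) (i : ℕ) : pinter f g i = min (f i) (g i) := rfl

lemma pinter_self (f : ℕ →₀ ℕ) : pinter f f = f := by
  ext i; exact min_self _

lemma differByOneBox_iff {f g : ℕ →₀ ℕ} :
    DifferByOneBox f g ↔ psize (pinter f g) + 1 = max (psize f) (psize g) := by
  refine ⟨And.right, fun h => ⟨?_, h⟩⟩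
  rintro rfl
  rw [pinter_self, max_self] at h
  omega

lemma psize_add (f g : ℕ →₀ ℕ) : psize (f + g) = psize f + psize g :=
  Finsupp.sum_add_index' (fun _ => rfl) (fun _ _ _ => rfl)

lemma pinter_add_right (f g a : ℕ →₀ ℕ) : pinter (f + a) (g + a) = pinter f g + a := by
  ext i; exact min_add_add_right _ _ _

lemma IsPartition.pinter {f g : ℕ →₀ ℕ} (hf : IsPartition f) (hg : IsPartition g) :
    IsPartition (pinter f g) :=
  fun _ _ hij => min_le_min (hf hij) (hg hij)

/-- For `t ≥ 1`, the `t`-th part `λ'_t` of the conjugate partition. -/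
def colLength (f : ℕ →₀ ℕ) (t : ℕ) : ℕ := (parts f).countP (t ≤ ·)

lemma colLength_eq_card (f : ℕ →₀ ℕ) (t : ℕ) :
    colLength f t = ({j ∈ f.support | t ≤ f j} : Finset ℕ).card := by
  rw [colLength, parts, Multiset.countP_map]
  rfl

lemma IsPartition.le_apply_iff_lt_colLength {f : ℕ →₀ ℕ} (hf : IsPartition f) {t : ℕ}
    (ht : 0 < t) (i : ℕ) : t ≤ f i ↔ i < colLength f t := by
  have hmem : ∀ j, j ∈ ({j ∈ f.support | t ≤ f j} : Finset ℕ) ↔ t ≤ f j := fun j => by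
    simp only [Finset.mem_filter, Finsupp.mem_support_iff, and_iff_right_iff_imp]
    omega
  rw [colLength_eq_card]
  constructor
  · intro hi
    have hsub : Finset.range (i + 1) ⊆ {j ∈ f.support | t ≤ f j} := fun j hj =>
      (hmem j).mpr (hi.trans (hf (Finset.mem_range_succ_iff.mp hj)))
    simpa using Finset.card_le_card hsub
  · intro hi
    by_contra hlt
    have hsub : {j ∈ f.support | t ≤ f j} ⊆ Finset.range i := fun j hj => by
      rw [hmem] at hj
      by_contra hji
      exact hlt (hj.trans (hf (not_lt.mp (Finset.mem_range.not.mp hji))))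
    have := Finset.card_le_card hsub
    rw [Finset.card_range] at this
    omega

lemma colLength_pinter {f g : ℕ →₀ ℕ} (hf : IsPartition f) (hg : IsPartition g) {t : ℕ}
    (ht : 0 < t) : colLength (pinter f g) t = min (colLength f t) (colLength g t) := by
  refine eq_of_forall_lt_iff fun i => ?_
  rw [← (hf.pinter hg).le_apply_iff_lt_colLength ht, pinter_apply, le_min_iff,
    hf.le_apply_iff_lt_colLength ht, hg.le_apply_iff_lt_colLength ht, lt_min_iff]

lemma List.le_getD_iff_lt_countP {l : List ℕ} (hl : l.Pairwise (· ≥ ·)) {t : ℕ} (ht : 0 < t)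
    (i : ℕ) : t ≤ l.getD i 0 ↔ i < l.countP (t ≤ ·) := by
  induction l generalizing i with
  | nil => simp only [List.getD_nil, List.countP_nil]; omega
  | cons a l ih =>
    obtain ⟨hle, hl⟩ := List.pairwise_cons.mp hl
    by_cases ha : t ≤ a
    · rw [List.countP_cons_of_pos (by simpa using ha)]
      cases i with
      | zero => simpa using ha
      | succ i => rw [List.getD_cons_succ, ih hl]; omega
    · have hzero : l.countP (t ≤ ·) = 0 :=
        List.countP_eq_zero.mpr fun b hb => by simpa using (hle b hb).trans_lt (not_le.mp ha)
      rw [List.countP_cons_of_neg (by simpa using ha), hzero]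
      cases i with
      | zero => simpa using ha
      | succ i => simpa [hzero] using ih hl i

lemma punion_apply (f g : ℕ →₀ ℕ) (i : ℕ) :
    punion f g i = ((parts f + parts g).sort (· ≤ ·)).reverse.getD i 0 :=
  Finsupp.onFinset_apply

lemma le_punion_apply_iff (f g : ℕ →₀ ℕ) {t : ℕ} (ht : 0 < t) (i : ℕ) :
    t ≤ punion f g i ↔ i < colLength f t + colLength g t := by
  have hsorted := List.pairwise_reverse.mpr (Multiset.pairwise_sort (parts f + parts g) (· ≤ ·))
  rw [punion_apply, List.le_getD_iff_lt_countP hsorted ht, List.countP_reverse,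
    ← Multiset.coe_countP, Multiset.sort_eq, Multiset.countP_add, colLength, colLength]

lemma psize_punion (f g : ℕ →₀ ℕ) : psize (punion f g) = psize f + psize g := by
  set l := ((parts f + parts g).sort (· ≤ ·)).reverse
  have hlen : l.length = (parts f + parts g).card := by simp [l]
  calc psize (punion f g) = ∑ i ∈ Finset.range l.length, l.getD i 0 := by
        rw [hlen]; exact Finsupp.onFinset_sum _ fun _ => rfl
    _ = l.sum := by
        rw [Finset.sum_range]
        simp only [Fin.is_lt, List.getD_eq_getElem, Fin.sum_univ_getElem]
    _ = psize f + psize g := by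
        rw [List.sum_reverse, ← Multiset.sum_coe, Multiset.sort_eq, Multiset.sum_add]; rfl

lemma pinter_punion_right {f g : ℕ →₀ ℕ} (hf : IsPartition f) (hg : IsPartition g)
    (a : ℕ →₀ ℕ) : pinter (punion f a) (punion g a) = punion (pinter f g) a := by
  ext i
  refine eq_of_forall_le_iff fun t => ?_
  rcases t.eq_zero_or_pos with rfl | ht
  · simp
  rw [pinter_apply, le_min_iff, le_punion_apply_iff _ _ ht, le_punion_apply_iff _ _ ht,
    le_punion_apply_iff _ _ ht, colLength_pinter hf hg ht]
  omega

theorem differByOneBox_add_union_general (ν₁ ν₂ : ℕ →₀ ℕ) (h₁ : IsPartition ν₁)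
    (h₂ : IsPartition ν₂) (hd : DifferByOneBox ν₁ ν₂)
    (α : ℕ →₀ ℕ) :
    DifferByOneBox (ν₁ + α) (ν₂ + α) ∧
    DifferByOneBox (punion ν₁ α) (punion ν₂ α) := by
  rw [differByOneBox_iff] at hd
  rw [differByOneBox_iff, differByOneBox_iff, pinter_add_right, pinter_punion_right h₁ h₂,
    psize_add, psize_add, psize_add, psize_punion, psize_punion, psize_punion]
  omega

/-- if two distinct partitions differ by one box, then so do their
sums and unions with any fixed partition `α`. -/
theorem differByOneBox_add_union (ν₁ ν₂ : ℕ →₀ ℕ) (h₁ : IsPartition ν₁)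
    (h₂ : IsPartition ν₂) (hne : ν₁ ≠ ν₂) (hd : DifferByOneBox ν₁ ν₂)
    (α : ℕ →₀ ℕ) (hα : IsPartition α) :
    DifferByOneBox (ν₁ + α) (ν₂ + α) ∧
    DifferByOneBox (punion ν₁ α) (punion ν₂ α) :=
  differByOneBox_add_union_general ν₁ ν₂ h₁ h₂ hd α
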